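/- Let p ∈ (1,+∞), let c ≥ 1, and let W : M^{3×3} → [0,+∞] satisfy assumptions (Ã1)–(Ã2). Define W₀(F) := inf_{ξ∈ℝ³} W((F|ξ)) for F ∈ M^{3×2}. Then: (i) if F¹∧F² = 0 (equivalently rank(F) ≤ 1) then W₀(F) = +∞; (ii) there exists a constant c̃ ≥ 1, depending only on c and p, such that for every F ∈ M^{3×2} with F¹∧F² ≠ 0, c̃⁻¹ ( |F|^p + |F¹∧F²|^{−p} ) − c̃ ≤ W₀(F) ≤ c̃ ( |F|^p + |F¹∧F²|^{−p} ) + c̃. -/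
import Mathlib

open scoped ENNReal
open Matrix

noncomputable section

/-- Frobenius norm of a real matrix. -/
def frob {m n : ℕ} (A : Matrix (Fin m) (Fin n) ℝ) : ℝ :=
  Real.sqrt (∑ i, ∑ j, (A i j) ^ 2)

/-- Euclidean norm on ℝ³ (viewed as `Fin 3 → ℝ`). -/
def enorm3 (v : Fin 3 → ℝ) : ℝ := Real.sqrt (∑ i, (v i) ^ 2)

/-- Cross product `F¹ ∧ F²` of the two columns of `F ∈ M^{3×2}`. -/
def colCross (F : Matrix (Fin 3) (Fin 2) ℝ) : Fin 3 → ℝ :=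
  crossProduct (fun i => F i 0) (fun i => F i 1)

/-- The 3×3 matrix `(F | ξ)` whose first two columns are the columns of `F : M^{3×2}`
and whose third column is `ξ ∈ ℝ³`. -/
def withCol (F : Matrix (Fin 3) (Fin 2) ℝ) (ξ : Fin 3 → ℝ) : Matrix (Fin 3) (Fin 3) ℝ :=
  Matrix.of fun i j => if h : (j : ℕ) < 2 then F i ⟨j, h⟩ else ξ i

/-- The reduced density `W₀(F) = inf_{ξ ∈ ℝ³} W((F|ξ))`. -/
def W₀ (W : Matrix (Fin 3) (Fin 3) ℝ → ℝ≥0∞) (F : Matrix (Fin 3) (Fin 2) ℝ) : ℝ≥0∞ :=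
  ⨅ ξ : Fin 3 → ℝ, W (withCol F ξ)

lemma det_withCol (F : Matrix (Fin 3) (Fin 2) ℝ) (ξ : Fin 3 → ℝ) :
    (withCol F ξ).det = colCross F ⬝ᵥ ξ := by
  simp [Matrix.det_fin_three, withCol, colCross, crossProduct, dotProduct,
    Fin.sum_univ_three]
  ring

lemma frob_nonneg {m n : ℕ} (A : Matrix (Fin m) (Fin n) ℝ) : 0 ≤ frob A := Real.sqrt_nonneg _

lemma enorm3_nonneg (v : Fin 3 → ℝ) : 0 ≤ enorm3 v := Real.sqrt_nonneg _

lemma frob_withCol (F : Matrix (Fin 3) (Fin 2) ℝ) (ξ : Fin 3 → ℝ) :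
    frob (withCol F ξ) = Real.sqrt (frob F ^ 2 + enorm3 ξ ^ 2) := by
  have h1 : frob F ^ 2 = ∑ i, ∑ j, (F i j) ^ 2 :=
    Real.sq_sqrt (Finset.sum_nonneg fun i _ => Finset.sum_nonneg fun j _ => sq_nonneg _)
  have h2 : enorm3 ξ ^ 2 = ∑ i, (ξ i) ^ 2 :=
    Real.sq_sqrt (Finset.sum_nonneg fun i _ => sq_nonneg _)
  rw [frob, h1, h2]
  congr 1
  simp [withCol, Fin.sum_univ_three, Fin.sum_univ_two]
  ring

lemma dot_self_eq (v : Fin 3 → ℝ) : v ⬝ᵥ v = enorm3 v ^ 2 := by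
  rw [enorm3, Real.sq_sqrt (Finset.sum_nonneg fun i _ => sq_nonneg _)]
  simp [dotProduct, sq]

lemma enorm3_pos {v : Fin 3 → ℝ} (hv : v ≠ 0) : 0 < enorm3 v := by
  rw [enorm3, Real.sqrt_pos]
  rcases (Finset.sum_nonneg fun i (_ : i ∈ Finset.univ) => sq_nonneg (v i)).lt_or_eq with h | h
  · exact h
  · exfalso
    apply hv
    funext i
    have := (Finset.sum_eq_zero_iff_of_nonneg
      (fun i (_ : i ∈ Finset.univ) => sq_nonneg (v i))).1 h.symm i (Finset.mem_univ i)
    exact pow_eq_zero_iff (n := 2) (by norm_num) |>.1 this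

/-- Cauchy–Schwarz for `Fin 3 → ℝ`. -/
lemma dot_le_norms (u v : Fin 3 → ℝ) : u ⬝ᵥ v ≤ enorm3 u * enorm3 v := by
  have key : (∑ i, u i * v i) ^ 2 ≤ (∑ i, (u i) ^ 2) * ∑ i, (v i) ^ 2 :=
    Finset.sum_mul_sq_le_sq_mul_sq Finset.univ u v
  have hU : (0:ℝ) ≤ ∑ i, (u i) ^ 2 := Finset.sum_nonneg fun i _ => sq_nonneg _
  have hV : (0:ℝ) ≤ ∑ i, (v i) ^ 2 := Finset.sum_nonneg fun i _ => sq_nonneg _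
  have h1 : u ⬝ᵥ v ≤ Real.sqrt ((∑ i, (u i) ^ 2) * ∑ i, (v i) ^ 2) := by
    calc u ⬝ᵥ v ≤ |∑ i, u i * v i| := le_abs_self _
    _ = Real.sqrt ((∑ i, u i * v i) ^ 2) := (Real.sqrt_sq_eq_abs _).symm
    _ ≤ _ := Real.sqrt_le_sqrt key
  rwa [Real.sqrt_mul hU, ← enorm3, ← enorm3] at h1

lemma rpow_max_le (a b p : ℝ) (ha : 0 ≤ a) (hb : 0 ≤ b) (hp : 0 ≤ p) :
    (max a b) ^ p ≤ a ^ p + b ^ p := by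
  rcases max_cases a b with ⟨h, _⟩ | ⟨h, _⟩ <;> rw [h]
  · nlinarith [Real.rpow_nonneg hb p]
  · nlinarith [Real.rpow_nonneg ha p]

/-- in the incompressible setting (Ã1)–(Ã2): (i) `W₀(F) = +∞` when the
columns of `F` have vanishing cross product; (ii) two-sided bounds
`c̃⁻¹(|F|^p + |F¹∧F²|^{−p}) − c̃ ≤ W₀(F) ≤ c̃(|F|^p + |F¹∧F²|^{−p}) + c̃` otherwise,
with `c̃` depending only on `c` and `p`. -/
theorem stmt16 (p c : ℝ) (hp : 1 < p) (hc : 1 ≤ c)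
    (W : Matrix (Fin 3) (Fin 3) ℝ → ℝ≥0∞)
    (hA1cont : ContinuousOn W {F : Matrix (Fin 3) (Fin 3) ℝ | F.det = 1})
    (hA1fin : ∀ F : Matrix (Fin 3) (Fin 3) ℝ, F.det = 1 → W F ≠ ⊤)
    (hA2top : ∀ F : Matrix (Fin 3) (Fin 3) ℝ, F.det ≠ 1 → W F = ⊤)
    (hA2bds : ∀ F : Matrix (Fin 3) (Fin 3) ℝ, F.det = 1 →
      ENNReal.ofReal (c⁻¹ * frob F ^ p - c) ≤ W F ∧
        W F ≤ ENNReal.ofReal (c * frob F ^ p + c)) :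
    (∀ F : Matrix (Fin 3) (Fin 2) ℝ, colCross F = 0 → W₀ W F = ⊤) ∧
    (∃ ct : ℝ, 1 ≤ ct ∧ ∀ F : Matrix (Fin 3) (Fin 2) ℝ, colCross F ≠ 0 →
      ENNReal.ofReal (ct⁻¹ * (frob F ^ p + (enorm3 (colCross F))⁻¹ ^ p) - ct) ≤ W₀ W F ∧
        W₀ W F ≤ ENNReal.ofReal (ct * (frob F ^ p + (enorm3 (colCross F))⁻¹ ^ p) + ct)) := by
  have hp0 : (0:ℝ) ≤ p := by linarith
  have h2p : (1:ℝ) ≤ (2:ℝ) ^ p := by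
    calc (1:ℝ) = (1:ℝ) ^ p := (Real.one_rpow p).symm
    _ ≤ (2:ℝ) ^ p := Real.rpow_le_rpow one_pos.le (by norm_num) hp0
  constructor
  · intro F hF
    rw [W₀, iInf_eq_top]
    intro ξ
    apply hA2top
    rw [det_withCol, hF]
    simp
  · refine ⟨2 * 2 ^ p * c, by nlinarith, ?_⟩
    intro F hF
    set n := colCross F with hn
    set A := frob F with hAdef
    set N := enorm3 n with hNdef
    have hA : 0 ≤ A := frob_nonneg F
    have hN : 0 < N := enorm3_pos hF
    set B := N⁻¹ with hBdef
    have hB : 0 < B := inv_pos.2 hN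
    have hAp : 0 ≤ A ^ p := Real.rpow_nonneg hA p
    have hBp : 0 ≤ B ^ p := Real.rpow_nonneg hB.le p
    set ct := 2 * (2:ℝ) ^ p * c with hctdef
    have hct1 : (1:ℝ) ≤ ct := by nlinarith
    have hct2c : 2 * c ≤ ct := by nlinarith
    have hct0 : 0 < ct := by linarith
    constructor
    · -- lower bound
      rw [W₀]
      refine le_iInf fun ξ => ?_
      by_cases hdet : (withCol F ξ).det = 1
      · refine le_trans ?_ (hA2bds _ hdet).1
        apply ENNReal.ofReal_le_ofReal
        -- dot product is 1, so enorm3 ξ ≥ B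
        have hdot : n ⬝ᵥ ξ = 1 := by rw [← det_withCol]; exact hdet
        have hE : B ≤ enorm3 ξ := by
          have hcs : (1:ℝ) ≤ N * enorm3 ξ := by
            calc (1:ℝ) = n ⬝ᵥ ξ := hdot.symm
            _ ≤ N * enorm3 ξ := dot_le_norms n ξ
          rw [hBdef, ← one_div]
          exact (div_le_iff₀ hN).2 (by linarith)
        set M := withCol F ξ with hM
        have hfM : frob M = Real.sqrt (A ^ 2 + enorm3 ξ ^ 2) := frob_withCol F ξ
        have hMA : A ≤ frob M := by
          rw [hfM]
          calc A = Real.sqrt (A ^ 2) := (Real.sqrt_sq hA).symm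
          _ ≤ _ := Real.sqrt_le_sqrt (by nlinarith [sq_nonneg (enorm3 ξ)])
        have hMB : B ≤ frob M := by
          rw [hfM]
          calc B ≤ enorm3 ξ := hE
          _ = Real.sqrt ((enorm3 ξ) ^ 2) := (Real.sqrt_sq (enorm3_nonneg ξ)).symm
          _ ≤ _ := Real.sqrt_le_sqrt (by nlinarith)
        have hMp : A ^ p + B ^ p ≤ 2 * frob M ^ p := by
          have h1 : A ^ p ≤ frob M ^ p := Real.rpow_le_rpow hA hMA hp0
          have h2 : B ^ p ≤ frob M ^ p := Real.rpow_le_rpow hB.le hMB hp0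
          linarith
        have hfMp : 0 ≤ frob M ^ p := Real.rpow_nonneg (frob_nonneg M) p
        -- ct⁻¹ * (A^p + B^p) ≤ c⁻¹ * frob M ^ p
        have key : ct⁻¹ * (A ^ p + B ^ p) ≤ c⁻¹ * frob M ^ p := by
          have hc0 : (0:ℝ) < c := by linarith
          have h1 : ct⁻¹ * (A ^ p + B ^ p) ≤ ct⁻¹ * (2 * frob M ^ p) :=
            mul_le_mul_of_nonneg_left hMp (inv_nonneg.2 hct0.le)
          have h2 : 2 * ct⁻¹ ≤ c⁻¹ := by
            rw [← one_div, ← one_div, mul_one_div, div_le_div_iff₀ hct0 hc0]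
            linarith
          calc ct⁻¹ * (A ^ p + B ^ p) ≤ ct⁻¹ * (2 * frob M ^ p) := h1
          _ = (2 * ct⁻¹) * frob M ^ p := by ring
          _ ≤ c⁻¹ * frob M ^ p := mul_le_mul_of_nonneg_right h2 hfMp
        linarith
      · rw [hA2top _ hdet]; exact le_top
    · -- upper bound
      -- choose ξ₀ = N⁻² • n
      set ξ₀ : Fin 3 → ℝ := fun i => (N ^ 2)⁻¹ * n i with hξ₀
      have hdet₀ : (withCol F ξ₀).det = 1 := by
        rw [det_withCol]
        have : n ⬝ᵥ ξ₀ = (N ^ 2)⁻¹ * (n ⬝ᵥ n) := by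
          simp [hξ₀, dotProduct, Fin.sum_univ_three]; ring
        rw [this, dot_self_eq, ← hNdef]
        field_simp
      have hnormξ₀ : enorm3 ξ₀ = B := by
        rw [enorm3]
        have : ∑ i, (ξ₀ i) ^ 2 = B ^ 2 := by
          have h1 : ∑ i, (ξ₀ i) ^ 2 = ((N ^ 2)⁻¹) ^ 2 * ∑ i, (n i) ^ 2 := by
            simp [hξ₀, mul_pow, Finset.mul_sum]
          have h2 : ∑ i, (n i) ^ 2 = N ^ 2 := by
            rw [hNdef, enorm3, Real.sq_sqrt (Finset.sum_nonneg fun i _ => sq_nonneg _)]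
          rw [h1, h2, hBdef]
          field_simp
        rw [this, Real.sqrt_sq hB.le]
      have hfM₀ : frob (withCol F ξ₀) = Real.sqrt (A ^ 2 + B ^ 2) := by
        rw [frob_withCol, hnormξ₀]
      refine le_trans (iInf_le _ ξ₀) (le_trans (hA2bds _ hdet₀).2 ?_)
      apply ENNReal.ofReal_le_ofReal
      have hMle : frob (withCol F ξ₀) ≤ A + B := by
        rw [hfM₀]
        calc Real.sqrt (A ^ 2 + B ^ 2) ≤ Real.sqrt ((A + B) ^ 2) :=
          Real.sqrt_le_sqrt (by nlinarith)
        _ = A + B := Real.sqrt_sq (by linarith)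
      have hMp : frob (withCol F ξ₀) ^ p ≤ 2 ^ p * (A ^ p + B ^ p) := by
        calc frob (withCol F ξ₀) ^ p ≤ (A + B) ^ p :=
          Real.rpow_le_rpow (frob_nonneg _) hMle hp0
        _ ≤ (2 * max A B) ^ p := by
            apply Real.rpow_le_rpow (by linarith) _ hp0
            rcases max_cases A B with ⟨h, _⟩ | ⟨h, _⟩ <;> rw [h] <;> linarith
        _ = 2 ^ p * (max A B) ^ p :=
            Real.mul_rpow (by norm_num) (le_max_of_le_left hA)
        _ ≤ 2 ^ p * (A ^ p + B ^ p) := by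
            apply mul_le_mul_of_nonneg_left (rpow_max_le A B p hA hB.le hp0)
            positivity
      have hfMp : 0 ≤ frob (withCol F ξ₀) ^ p := Real.rpow_nonneg (frob_nonneg _) p
      nlinarith [mul_le_mul_of_nonneg_left hMp (by linarith : (0:ℝ) ≤ c)]
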